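/- arXiv:2404.10547 — 2 statements merged into one kernel-verified Lean document; each statement's English description precedes it below -/
import Mathlib

section
/- Consider n units with true neighborhoods N_i and assumed neighborhoods M_i satisfying N_i ⊆ M_i. Suppose outcomes follow the linear model Y_i(z) = c_i + Σ_{j∈N_i} c_{ij}·1[z_j = 1], and treatments z_1,...,z_n are mutually independent Bernoulli(p) with 0 < p < 1. Then the estimator τ̂_Lin = (1/n) Σ_i Y_i(z) · Σ_{j∈M_i} ( z_j/p − (1−z_j)/(1−p) ) satisfies E[τ̂_Lin] = (1/n) Σ_i Σ_{j∈N_i} c_{ij}, the global average treatment effect τ(1⃗, 0⃗). -/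
/-!
Write `W_k = z_k / p - (1 - z_k) / (1 - p)` for the contrast attached to unit `k`. It is affine
in `z_k`, so `E[W_k] = 0`; since `z_k (1 - z_k) = 0` we get `z_k W_k = z_k / p`, whence
`E[z_k W_k] = 1`; and for `j ≠ k` independence gives `E[z_j W_k] = E[z_j] E[W_k] = 0`. Expanding
`Y_i · Σ_{k ∈ M_i} W_k` with the linear model, the terms `c_i W_k` and `c_{ij} z_j W_k` with
`k ≠ j` have mean zero, and each `c_{ij}`, `j ∈ N_i ⊆ M_i`, survives exactly once, from `k = j`.
-/

open MeasureTheory ProbabilityTheory Finset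

namespace Interference

theorem affine_mul_sum_eq {ι R : Type*} [CommSemiring R] (a : R) (b u w : ι → R)
    (N M : Finset ι) :
    (a + ∑ j ∈ N, b j * u j) * ∑ k ∈ M, w k =
      a * ∑ k ∈ M, w k + ∑ j ∈ N, b j * ∑ k ∈ M, u j * w k := by
  rw [add_mul, sum_mul]
  congr 1
  exact sum_congr rfl fun j _ ↦ by rw [mul_sum, mul_sum]; exact sum_congr rfl fun k _ ↦ by ring

section Orthogonality

variable {Ω ι : Type*} [MeasurableSpace Ω] {μ : Measure Ω} {U W : ι → Ω → ℝ}

theorem integrable_affine_mul_sum (hW : ∀ k, Integrable (W k) μ)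
    (hUW : ∀ j k, Integrable (fun ω ↦ U j ω * W k ω) μ) (a : ℝ) (b : ι → ℝ) (N M : Finset ι) :
    Integrable (fun ω ↦ (a + ∑ j ∈ N, b j * U j ω) * ∑ k ∈ M, W k ω) μ := by
  simp only [affine_mul_sum_eq]
  exact ((integrable_finsetSum M fun k _ ↦ hW k).const_mul a).add
    (integrable_finsetSum N fun j _ ↦
      (integrable_finsetSum M fun k _ ↦ hUW j k).const_mul (b j))

theorem integral_affine_mul_sum [DecidableEq ι] (hW : ∀ k, Integrable (W k) μ)
    (hUW : ∀ j k, Integrable (fun ω ↦ U j ω * W k ω) μ) (hW₀ : ∀ k, ∫ ω, W k ω ∂μ = 0)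
    (hUW₁ : ∀ j k, ∫ ω, U j ω * W k ω ∂μ = if j = k then 1 else 0)
    (a : ℝ) (b : ι → ℝ) {N M : Finset ι} (hNM : N ⊆ M) :
    ∫ ω, (a + ∑ j ∈ N, b j * U j ω) * ∑ k ∈ M, W k ω ∂μ = ∑ j ∈ N, b j := by
  have hsumW : Integrable (fun ω ↦ ∑ k ∈ M, W k ω) μ := integrable_finsetSum M fun k _ ↦ hW k
  have hsumUW : ∀ j, Integrable (fun ω ↦ ∑ k ∈ M, U j ω * W k ω) μ :=
    fun j ↦ integrable_finsetSum M fun k _ ↦ hUW j k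
  simp only [affine_mul_sum_eq]
  rw [integral_add (hsumW.const_mul a)
      (integrable_finsetSum N fun j _ ↦ (hsumUW j).const_mul (b j)),
    integral_const_mul, integral_finsetSum M fun k _ ↦ hW k,
    integral_finsetSum N fun j _ ↦ (hsumUW j).const_mul (b j)]
  simp only [hW₀, sum_const_zero, mul_zero, zero_add]
  refine sum_congr rfl fun j hj ↦ ?_
  rw [integral_const_mul, integral_finsetSum M fun k _ ↦ hUW j k]
  simp only [hUW₁, sum_ite_eq, if_pos (hNM hj), mul_one]

end Orthogonality

noncomputable def ipwContrast (p x : ℝ) : ℝ := x / p - (1 - x) / (1 - p)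

theorem measurable_ipwContrast (p : ℝ) : Measurable (ipwContrast p) := by
  unfold ipwContrast
  fun_prop

theorem ipwContrast_self {p : ℝ} (hp₀ : p ≠ 0) (hp₁ : p ≠ 1) : ipwContrast p p = 0 := by
  have : 1 - p ≠ 0 := sub_ne_zero.mpr hp₁.symm
  simp [ipwContrast, div_self hp₀, div_self this]

theorem mul_ipwContrast_of_eq_zero_or_one (p : ℝ) {x : ℝ} (hx : x = 0 ∨ x = 1) :
    x * ipwContrast p x = x / p := by
  rcases hx with rfl | rfl <;> simp [ipwContrast]

theorem norm_le_one_of_eq_zero_or_one {x : ℝ} (hx : x = 0 ∨ x = 1) : ‖x‖ ≤ 1 := by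
  rcases hx with rfl | rfl <;> simp

section Bernoulli

variable {Ω : Type*} [MeasurableSpace Ω] {μ : Measure Ω} {X : Ω → ℝ}

theorem integrable_of_forall_eq_zero_or_one [IsFiniteMeasure μ] (hX : Measurable X)
    (h01 : ∀ ω, X ω = 0 ∨ X ω = 1) : Integrable X μ :=
  .of_bound hX.aestronglyMeasurable 1 <| .of_forall fun ω ↦ norm_le_one_of_eq_zero_or_one (h01 ω)

theorem integral_eq_measureReal_of_forall_eq_zero_or_one (hX : Measurable X)
    (h01 : ∀ ω, X ω = 0 ∨ X ω = 1) : ∫ ω, X ω ∂μ = μ.real {ω | X ω = 1} := by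
  have hX_eq : X = Set.indicator {ω | X ω = 1} 1 := by
    ext ω
    rcases h01 ω with h | h <;> simp [h]
  conv_lhs => rw [hX_eq]
  exact integral_indicator_one (hX (measurableSet_singleton 1))

theorem integrable_one_sub [IsFiniteMeasure μ] (hX : Integrable X μ) :
    Integrable (fun ω ↦ 1 - X ω) μ :=
  (integrable_const 1).sub hX

theorem integrable_ipwContrast [IsFiniteMeasure μ] (p : ℝ) (hX : Integrable X μ) :
    Integrable (fun ω ↦ ipwContrast p (X ω)) μ :=
  (hX.div_const p).sub ((integrable_one_sub hX).div_const (1 - p))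

theorem integral_ipwContrast [IsProbabilityMeasure μ] (p : ℝ) (hX : Integrable X μ) :
    ∫ ω, ipwContrast p (X ω) ∂μ = ipwContrast p (∫ ω, X ω ∂μ) := by
  simp only [ipwContrast]
  rw [integral_sub (hX.div_const p) ((integrable_one_sub hX).div_const (1 - p)),
    integral_div, integral_div, integral_sub (integrable_const 1) hX, integral_const]
  simp

end Bernoulli

section IndependentBernoulli

variable {Ω ι : Type*} [MeasurableSpace Ω] {μ : Measure Ω} [IsProbabilityMeasure μ]
  {z : ι → Ω → ℝ} {p : ℝ}

theorem integral_ipwContrast_eq_zero (hmeas : ∀ i, Measurable (z i))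
    (h01 : ∀ i ω, z i ω = 0 ∨ z i ω = 1) (hmean : ∀ i, ∫ ω, z i ω ∂μ = p) (hp₀ : p ≠ 0)
    (hp₁ : p ≠ 1) (k : ι) : ∫ ω, ipwContrast p (z k ω) ∂μ = 0 := by
  rw [integral_ipwContrast p (integrable_of_forall_eq_zero_or_one (hmeas k) (h01 k)), hmean k,
    ipwContrast_self hp₀ hp₁]

theorem integrable_mul_ipwContrast (hmeas : ∀ i, Measurable (z i))
    (h01 : ∀ i ω, z i ω = 0 ∨ z i ω = 1) (p : ℝ) (j k : ι) :
    Integrable (fun ω ↦ z j ω * ipwContrast p (z k ω)) μ :=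
  (integrable_ipwContrast p (integrable_of_forall_eq_zero_or_one (hmeas k) (h01 k))).bdd_mul
    (hmeas j).aestronglyMeasurable
    (.of_forall fun ω ↦ norm_le_one_of_eq_zero_or_one (h01 j ω))

theorem integral_mul_ipwContrast [DecidableEq ι] (hmeas : ∀ i, Measurable (z i))
    (hindep : iIndepFun z μ) (h01 : ∀ i ω, z i ω = 0 ∨ z i ω = 1)
    (hmean : ∀ i, ∫ ω, z i ω ∂μ = p) (hp₀ : p ≠ 0) (hp₁ : p ≠ 1) (j k : ι) :
    ∫ ω, z j ω * ipwContrast p (z k ω) ∂μ = if j = k then 1 else 0 := by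
  split_ifs with hjk
  · subst hjk
    simp_rw [mul_ipwContrast_of_eq_zero_or_one p (h01 j _)]
    rw [integral_div, hmean j, div_self hp₀]
  · have hind : IndepFun (z j) (ipwContrast p ∘ z k) μ :=
      (hindep.indepFun hjk).comp measurable_id (measurable_ipwContrast p)
    have hprod := hind.integral_mul_eq_mul_integral (hmeas j).aestronglyMeasurable
      ((measurable_ipwContrast p).comp (hmeas k)).aestronglyMeasurable
    simp only [Pi.mul_apply, Function.comp_apply] at hprod
    rw [hprod, integral_ipwContrast_eq_zero hmeas h01 hmean hp₀ hp₁, mul_zero]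

end IndependentBernoulli

end Interference

open Interference in
theorem stmt8_general {Ω : Type*} [MeasureSpace Ω] [IsProbabilityMeasure (ℙ : Measure Ω)]
    {n : ℕ} (z : Fin n → Ω → ℝ) (p : ℝ) (hp0 : 0 < p) (hp1 : p < 1)
    (hmeas : ∀ i, Measurable (z i))
    (hindep : iIndepFun z ℙ)
    (hval : ∀ i ω, z i ω = 0 ∨ z i ω = 1)
    (hbern : ∀ i, (ℙ {ω | z i ω = 1}).toReal = p)
    (N M : Fin n → Finset (Fin n)) (hNM : ∀ i, N i ⊆ M i)
    (c : Fin n → ℝ) (cc : Fin n → Fin n → ℝ)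
    (Y : Fin n → Ω → ℝ)
    (hY : ∀ i ω, Y i ω =
      c i + ∑ j ∈ N i, cc i j * (if z j ω = 1 then (1 : ℝ) else 0)) :
    (∫ ω, (1 / (n : ℝ)) * ∑ i, Y i ω *
        (∑ j ∈ M i, (z j ω / p - (1 - z j ω) / (1 - p))) ∂ℙ)
      = (1 / (n : ℝ)) * ∑ i, ∑ j ∈ N i, cc i j := by
  have hmean i : ∫ ω, z i ω = p := by
    rw [integral_eq_measureReal_of_forall_eq_zero_or_one (hmeas i) (hval i), measureReal_def,
      hbern i]
  have hp₀ : p ≠ 0 := hp0.ne'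
  have hp₁ : p ≠ 1 := hp1.ne
  have hY' i ω : Y i ω * ∑ j ∈ M i, (z j ω / p - (1 - z j ω) / (1 - p)) =
      (c i + ∑ j ∈ N i, cc i j * z j ω) * ∑ k ∈ M i, ipwContrast p (z k ω) := by
    rw [hY]
    congr 3 with j
    rcases hval j ω with h | h <;> simp [h]
  have hW k := integrable_ipwContrast p
    (integrable_of_forall_eq_zero_or_one (μ := ℙ) (hmeas k) (hval k))
  have hzW := integrable_mul_ipwContrast (μ := ℙ) hmeas hval p
  simp_rw [hY']
  rw [integral_const_mul, integral_finsetSum _ fun i _ ↦ integrable_affine_mul_sum hW hzW _ _ _ _]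
  congr 1
  exact sum_congr rfl fun i _ ↦ integral_affine_mul_sum hW hzW
    (integral_ipwContrast_eq_zero hmeas hval hmean hp₀ hp₁)
    (integral_mul_ipwContrast hmeas hindep hval hmean hp₀ hp₁) _ _ (hNM i)

theorem stmt8 {Ω : Type*} [MeasureSpace Ω] [IsProbabilityMeasure (ℙ : Measure Ω)]
    {n : ℕ} (hn : 0 < n) (z : Fin n → Ω → ℝ) (p : ℝ) (hp0 : 0 < p) (hp1 : p < 1)
    (hmeas : ∀ i, Measurable (z i))
    (hindep : iIndepFun z ℙ)
    (hval : ∀ i ω, z i ω = 0 ∨ z i ω = 1)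
    (hbern : ∀ i, (ℙ {ω | z i ω = 1}).toReal = p)
    (N M : Fin n → Finset (Fin n)) (hNM : ∀ i, N i ⊆ M i)
    (c : Fin n → ℝ) (cc : Fin n → Fin n → ℝ)
    (Y : Fin n → Ω → ℝ)
    (hY : ∀ i ω, Y i ω =
      c i + ∑ j ∈ N i, cc i j * (if z j ω = 1 then (1 : ℝ) else 0)) :
    (∫ ω, (1 / (n : ℝ)) * ∑ i, Y i ω *
        (∑ j ∈ M i, (z j ω / p - (1 - z j ω) / (1 - p))) ∂ℙ)
      = (1 / (n : ℝ)) * ∑ i, ∑ j ∈ N i, cc i j :=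
  stmt8_general z p hp0 hp1 hmeas hindep hval hbern N M hNM c cc Y hY
end

section
/- Consider n units with true neighborhoods N_i and supersets M_i ⊇ N_i. Suppose outcomes follow the motif model Y_i(z) = c_i + Σ_{S'⊆N_i, |S'|≤β} c_{i,S'} ∏_{j∈S'} 1[z_j = 1], with z_1,...,z_n mutually independent Bernoulli(p), 0 < p < 1. Then the estimator τ̂^β = (1/n) Σ_i Y_i(z) Σ_{S⊆M_i, |S|≤β} ( ∏_{j∈S}(z_j−p)/p − ∏_{j∈S}(p−z_j)/(1−p) ) satisfies E[τ̂^β] = (1/n) Σ_i Σ_{S'⊆N_i, |S'|≤β} c_{i,S'} = τ(1⃗, 0⃗). -/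
open MeasureTheory ProbabilityTheory Finset

/-! Let `W` be the weight multiplying `Y_i(z)` in the estimator. Independence factors the
expectation of `∏_{j ∈ S'} 1[z_j = 1] * ∏_{j ∈ S} g(z_j)` coordinatewise; when `g` is centred
(`E g(z_j) = 0`) it vanishes unless `S ⊆ S'`, and otherwise equals `(g(1) p)^|S| p^(|S'| - |S|)`.
Since `S' ⊆ N_i ⊆ M_i` and `|S'| ≤ β`, every `S ⊆ S'` occurs in `W`, so the binomial theorem sums
these to `(g(1) p + p)^|S'|`. The two products in `W` have `g(1) p = 1 - p` and `g(1) p = -p`,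
hence `E[∏_{j ∈ S'} 1[z_j = 1] * W] = 1 - 0^|S'|`: it is `1` for every motif and `0` for the
constant term. -/

structure IsBernoulliFamily {Ω ι : Type*} [MeasureSpace Ω] (z : ι → Ω → ℝ) (p : ℝ) : Prop where
  measurable : ∀ j, Measurable (z j)
  eq_zero_or_eq_one : ∀ j ω, z j ω = 0 ∨ z j ω = 1
  measure_setOf_eq_one : ∀ j, (ℙ {ω | z j ω = 1}).toReal = p

theorem Finset.prod_mul_prod_eq_prod_ite_mul_ite {ι M : Type*} [Fintype ι] [DecidableEq ι]
    [CommMonoid M] (s t : Finset ι) (u v : ι → M) :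
    (∏ j ∈ s, u j) * ∏ j ∈ t, v j
      = ∏ j, (if j ∈ s then u j else 1) * (if j ∈ t then v j else 1) := by
  rw [prod_mul_distrib, prod_ite_mem, prod_ite_mem, univ_inter, univ_inter]

theorem measurable_ite_indicator_mul_ite {ι : Type*} [DecidableEq ι] (S' S : Finset ι)
    {g : ℝ → ℝ} (hg : Measurable g) (j : ι) :
    Measurable fun x : ℝ =>
      (if j ∈ S' then (if x = 1 then (1 : ℝ) else 0) else 1) * (if j ∈ S then g x else 1) :=
  (Measurable.ite (.const _) (Measurable.ite (measurableSet_singleton 1) measurable_const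
    measurable_const) measurable_const).mul (Measurable.ite (.const _) hg measurable_const)

theorem Finset.sum_filter_card_le_ite_subset {ι M : Type*} [DecidableEq ι] [AddCommMonoid M]
    {β : ℕ} {S' T : Finset ι} (hS'T : S' ⊆ T) (hS'β : #S' ≤ β) (F : Finset ι → M) :
    ∑ S ∈ T.powerset.filter (fun S => #S ≤ β), (if S ⊆ S' then F S else 0)
      = ∑ S ∈ S'.powerset, F S := by
  rw [← sum_filter]
  congr 1
  ext S
  simp only [mem_filter, mem_powerset]
  exact ⟨fun h => h.2, fun h => ⟨⟨h.trans hS'T, (card_le_card h).trans hS'β⟩, h⟩⟩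

noncomputable def estimatorWeight {ι : Type*} (p : ℝ) (β : ℕ) (M : Finset ι) (x : ι → ℝ) : ℝ :=
  ∑ S ∈ M.powerset.filter (fun S => #S ≤ β),
    ((∏ j ∈ S, (x j - p) / p) - ∏ j ∈ S, (p - x j) / (1 - p))

namespace IsBernoulliFamily

variable {Ω ι : Type*} [MeasureSpace Ω] {z : ι → Ω → ℝ} {p : ℝ}

theorem norm_comp_le (hz : IsBernoulliFamily z p) (j : ι) (ω : Ω) (f : ℝ → ℝ) :
    ‖f (z j ω)‖ ≤ |f 0| + |f 1| := by
  rcases hz.eq_zero_or_eq_one j ω with h | h <;> simp [h, Real.norm_eq_abs]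

variable [IsProbabilityMeasure (ℙ : Measure Ω)]

theorem integral_comp (hz : IsBernoulliFamily z p) (j : ι) (f : ℝ → ℝ) :
    ∫ ω, f (z j ω) = f 1 * p + f 0 * (1 - p) := by
  have hA : MeasurableSet {ω | z j ω = 1} := hz.measurable j (measurableSet_singleton 1)
  have hf : (fun ω => f (z j ω))
      = fun ω => {ω | z j ω = 1}.indicator (fun _ => f 1 - f 0) ω + f 0 := by
    funext ω
    rcases hz.eq_zero_or_eq_one j ω with h | h <;> simp [h]
  rw [hf, integral_add ((integrable_const _).indicator hA) (integrable_const _),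
    integral_indicator_const _ hA, integral_const]
  simp only [measureReal_def, hz.measure_setOf_eq_one j, measure_univ, ENNReal.toReal_one, smul_eq_mul]
  ring

variable [Fintype ι]

theorem integrable_prod_comp (hz : IsBernoulliFamily z p) {h : ι → ℝ → ℝ}
    (hh : ∀ j, Measurable (h j)) : Integrable (fun ω => ∏ j, h j (z j ω)) := by
  refine .of_bound (C := ∏ j, (|h j 0| + |h j 1|))
    (Finset.measurable_prod _ fun j _ => (hh j).comp (hz.measurable j)).aestronglyMeasurable
    (.of_forall fun ω => ?_)
  rw [norm_prod]
  exact prod_le_prod (fun j _ => norm_nonneg _) fun j _ => hz.norm_comp_le j ω (h j)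

theorem integral_prod_comp (hz : IsBernoulliFamily z p) (hind : iIndepFun z)
    {h : ι → ℝ → ℝ} (hh : ∀ j, Measurable (h j)) :
    ∫ ω, ∏ j, h j (z j ω) = ∏ j, (h j 1 * p + h j 0 * (1 - p)) := by
  rw [hind.integral_fun_prod_comp (fun j => (hz.measurable j).aemeasurable)
    (fun j => (hh j).aestronglyMeasurable)]
  exact prod_congr rfl fun j _ => hz.integral_comp j (h j)

variable [DecidableEq ι]

theorem integrable_prod_indicator_mul_prod (hz : IsBernoulliFamily z p) {g : ℝ → ℝ}
    (hg : Measurable g) (S' S : Finset ι) :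
    Integrable fun ω =>
      (∏ j ∈ S', if z j ω = 1 then (1 : ℝ) else 0) * ∏ j ∈ S, g (z j ω) := by
  simp_rw [prod_mul_prod_eq_prod_ite_mul_ite]
  exact hz.integrable_prod_comp (measurable_ite_indicator_mul_ite S' S hg)

theorem integral_prod_indicator_mul_prod (hz : IsBernoulliFamily z p) (hind : iIndepFun z)
    {g : ℝ → ℝ} (hg : Measurable g) (hg₀ : g 1 * p + g 0 * (1 - p) = 0) (S' S : Finset ι) :
    ∫ ω, (∏ j ∈ S', if z j ω = 1 then (1 : ℝ) else 0) * ∏ j ∈ S, g (z j ω)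
      = if S ⊆ S' then (g 1 * p) ^ #S * p ^ (#S' - #S) else 0 := by
  simp_rw [prod_mul_prod_eq_prod_ite_mul_ite]
  rw [hz.integral_prod_comp hind (measurable_ite_indicator_mul_ite S' S hg)]
  by_cases hSS' : S ⊆ S'
  · rw [if_pos hSS']
    calc _ = ∏ j, (if j ∈ S then g 1 * p else 1) * (if j ∈ S' \ S then p else 1) := by
          refine prod_congr rfl fun j _ => ?_
          by_cases hjS : j ∈ S
          · simp [hjS, hSS' hjS]
          · by_cases hjS' : j ∈ S' <;> simp [hjS, hjS']
      _ = _ := by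
          rw [prod_mul_distrib, prod_ite_mem, prod_ite_mem, univ_inter, univ_inter, prod_const,
            prod_const, card_sdiff_of_subset hSS']
  · rw [if_neg hSS']
    obtain ⟨j, hjS, hjS'⟩ := not_subset.mp hSS'
    exact prod_eq_zero (mem_univ j) (by simpa [hjS, hjS'] using hg₀)

theorem sum_integral_prod_indicator_mul_prod (hz : IsBernoulliFamily z p) (hind : iIndepFun z)
    {g : ℝ → ℝ} (hg : Measurable g) (hg₀ : g 1 * p + g 0 * (1 - p) = 0) {β : ℕ}
    {S' M : Finset ι} (hS'M : S' ⊆ M) (hS'β : #S' ≤ β) :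
    ∑ S ∈ M.powerset.filter (fun S => #S ≤ β),
        ∫ ω, (∏ j ∈ S', if z j ω = 1 then (1 : ℝ) else 0) * ∏ j ∈ S, g (z j ω)
      = (g 1 * p + p) ^ #S' := by
  simp_rw [hz.integral_prod_indicator_mul_prod hind hg hg₀]
  rw [sum_filter_card_le_ite_subset hS'M hS'β, sum_pow_mul_eq_add_pow]

theorem integrable_prod_indicator_mul_estimatorWeight (hz : IsBernoulliFamily z p) (β : ℕ)
    (S' M : Finset ι) :
    Integrable fun ω =>
      (∏ j ∈ S', if z j ω = 1 then (1 : ℝ) else 0) * estimatorWeight p β M (z · ω) := by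
  simp only [estimatorWeight, mul_sum, mul_sub]
  exact integrable_finsetSum _ fun S _ =>
    (hz.integrable_prod_indicator_mul_prod (g := fun x => (x - p) / p) (by fun_prop) S' S).sub
      (hz.integrable_prod_indicator_mul_prod (g := fun x => (p - x) / (1 - p)) (by fun_prop) S' S)

theorem integral_prod_indicator_mul_estimatorWeight (hz : IsBernoulliFamily z p)
    (hind : iIndepFun z) (hp₀ : p ≠ 0) (hp₁ : p ≠ 1) {β : ℕ} {S' M : Finset ι}
    (hS'M : S' ⊆ M) (hS'β : #S' ≤ β) :
    ∫ ω, (∏ j ∈ S', if z j ω = 1 then (1 : ℝ) else 0) * estimatorWeight p β M (z · ω)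
      = 1 - 0 ^ #S' := by
  have hp₁' : 1 - p ≠ 0 := sub_ne_zero.mpr hp₁.symm
  have hg₁ : Measurable fun x : ℝ => (x - p) / p := by fun_prop
  have hg₂ : Measurable fun x : ℝ => (p - x) / (1 - p) := by fun_prop
  have hg₁₀ : (1 - p) / p * p + (0 - p) / p * (1 - p) = 0 := by field_simp; ring
  have hg₂₀ : (p - 1) / (1 - p) * p + (p - 0) / (1 - p) * (1 - p) = 0 := by field_simp; ring
  have hint : ∀ S : Finset ι, Integrable fun ω =>
      (∏ j ∈ S', if z j ω = 1 then (1 : ℝ) else 0) * ∏ j ∈ S, (z j ω - p) / p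
        - (∏ j ∈ S', if z j ω = 1 then (1 : ℝ) else 0) * ∏ j ∈ S, (p - z j ω) / (1 - p) :=
    fun S => (hz.integrable_prod_indicator_mul_prod hg₁ S' S).sub
      (hz.integrable_prod_indicator_mul_prod hg₂ S' S)
  simp only [estimatorWeight, mul_sum, mul_sub]
  rw [integral_finsetSum _ fun S _ => hint S, sum_congr rfl fun S _ => integral_sub (hz.integrable_prod_indicator_mul_prod hg₁ S' S)
      (hz.integrable_prod_indicator_mul_prod hg₂ S' S), sum_sub_distrib,
    hz.sum_integral_prod_indicator_mul_prod hind hg₁ hg₁₀ hS'M hS'β,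
    hz.sum_integral_prod_indicator_mul_prod hind hg₂ hg₂₀ hS'M hS'β]
  have h₁ : (1 - p) / p * p + p = 1 := by field_simp; ring
  have h₂ : (p - 1) / (1 - p) * p + p = 0 := by field_simp; ring
  rw [h₁, h₂, one_pow]

theorem integrable_estimatorWeight (hz : IsBernoulliFamily z p) (β : ℕ) (M : Finset ι) :
    Integrable fun ω => estimatorWeight p β M (z · ω) := by
  simpa using hz.integrable_prod_indicator_mul_estimatorWeight β ∅ M

theorem integral_estimatorWeight (hz : IsBernoulliFamily z p) (hind : iIndepFun z) (hp₀ : p ≠ 0)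
    (hp₁ : p ≠ 1) (β : ℕ) (M : Finset ι) :
    ∫ ω, estimatorWeight p β M (z · ω) = 0 := by
  simpa using hz.integral_prod_indicator_mul_estimatorWeight hind hp₀ hp₁ (empty_subset M)
    (Nat.zero_le β)

theorem integrable_motif_mul_estimatorWeight (hz : IsBernoulliFamily z p) (β : ℕ)
    (M : Finset ι) (T : Finset (Finset ι)) (c : ℝ) (a : Finset ι → ℝ) :
    Integrable fun ω => (c + ∑ S' ∈ T, a S' * ∏ j ∈ S', if z j ω = 1 then (1 : ℝ) else 0)
      * estimatorWeight p β M (z · ω) := by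
  simp_rw [add_mul, sum_mul, mul_assoc]
  exact ((hz.integrable_estimatorWeight β M).const_mul c).add (integrable_finsetSum _ fun S' _ =>
    (hz.integrable_prod_indicator_mul_estimatorWeight β S' M).const_mul (a S'))

theorem integral_motif_mul_estimatorWeight (hz : IsBernoulliFamily z p) (hind : iIndepFun z)
    (hp₀ : p ≠ 0) (hp₁ : p ≠ 1) {β : ℕ} {M : Finset ι} {T : Finset (Finset ι)}
    (hT : ∀ S' ∈ T, S' ⊆ M ∧ #S' ≤ β ∧ S'.Nonempty) (c : ℝ) (a : Finset ι → ℝ) :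
    ∫ ω, (c + ∑ S' ∈ T, a S' * ∏ j ∈ S', if z j ω = 1 then (1 : ℝ) else 0)
      * estimatorWeight p β M (z · ω) = ∑ S' ∈ T, a S' := by
  simp_rw [add_mul, sum_mul, mul_assoc]
  rw [integral_add ((hz.integrable_estimatorWeight β M).const_mul c) (integrable_finsetSum _
      fun S' _ => (hz.integrable_prod_indicator_mul_estimatorWeight β S' M).const_mul (a S')),
    integral_const_mul, hz.integral_estimatorWeight hind hp₀ hp₁, mul_zero, zero_add,
    integral_finsetSum _ fun S' _ =>
      (hz.integrable_prod_indicator_mul_estimatorWeight β S' M).const_mul (a S')]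
  refine sum_congr rfl fun S' hS' => ?_
  obtain ⟨hS'M, hS'β, hS'⟩ := hT S' hS'
  rw [integral_const_mul, hz.integral_prod_indicator_mul_estimatorWeight hind hp₀ hp₁ hS'M hS'β,
    zero_pow (card_ne_zero.mpr hS'), sub_zero, mul_one]

end IsBernoulliFamily

theorem stmt9_general {Ω : Type*} [MeasureSpace Ω] [IsProbabilityMeasure (ℙ : Measure Ω)]
    {n : ℕ} (z : Fin n → Ω → ℝ) (p : ℝ) (hp0 : 0 < p) (hp1 : p < 1)
    (hmeas : ∀ i, Measurable (z i))
    (hindep : iIndepFun z ℙ)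
    (hval : ∀ i ω, z i ω = 0 ∨ z i ω = 1)
    (hbern : ∀ i, (ℙ {ω | z i ω = 1}).toReal = p)
    (β : ℕ) (N M : Fin n → Finset (Fin n)) (hNM : ∀ i, N i ⊆ M i)
    (c : Fin n → ℝ) (cS : Fin n → Finset (Fin n) → ℝ)
    (Y : Fin n → Ω → ℝ)
    (hY : ∀ i ω, Y i ω =
      c i + ∑ S' ∈ (N i).powerset.filter (fun S' => S'.card ≤ β ∧ S'.Nonempty),
        cS i S' * ∏ j ∈ S', (if z j ω = 1 then (1 : ℝ) else 0)) :
    (∫ ω, (1 / (n : ℝ)) * ∑ i, Y i ω *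
        (∑ S ∈ (M i).powerset.filter (fun S => S.card ≤ β),
          ((∏ j ∈ S, (z j ω - p) / p) - ∏ j ∈ S, (p - z j ω) / (1 - p))) ∂ℙ)
      = (1 / (n : ℝ)) * ∑ i,
          ∑ S' ∈ (N i).powerset.filter (fun S' => S'.card ≤ β ∧ S'.Nonempty), cS i S' := by
  have hz : IsBernoulliFamily z p := ⟨hmeas, hval, hbern⟩
  have hT : ∀ i, ∀ S' ∈ (N i).powerset.filter (fun S' => #S' ≤ β ∧ S'.Nonempty),
      S' ⊆ M i ∧ #S' ≤ β ∧ S'.Nonempty := by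
    intro i S' hS'
    rw [mem_filter, mem_powerset] at hS'
    exact ⟨hS'.1.trans (hNM i), hS'.2⟩
  simp_rw [hY, ← estimatorWeight.eq_1]
  rw [integral_const_mul, integral_finsetSum _ fun i _ =>
    hz.integrable_motif_mul_estimatorWeight β (M i) _ (c i) (cS i)]
  exact congrArg _ (sum_congr rfl fun i _ =>
    hz.integral_motif_mul_estimatorWeight hindep hp0.ne' hp1.ne (hT i) (c i) (cS i))

theorem stmt9 {Ω : Type*} [MeasureSpace Ω] [IsProbabilityMeasure (ℙ : Measure Ω)]
    {n : ℕ} (hn : 0 < n) (z : Fin n → Ω → ℝ) (p : ℝ) (hp0 : 0 < p) (hp1 : p < 1)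
    (hmeas : ∀ i, Measurable (z i))
    (hindep : iIndepFun z ℙ)
    (hval : ∀ i ω, z i ω = 0 ∨ z i ω = 1)
    (hbern : ∀ i, (ℙ {ω | z i ω = 1}).toReal = p)
    (β : ℕ) (N M : Fin n → Finset (Fin n)) (hNM : ∀ i, N i ⊆ M i)
    (c : Fin n → ℝ) (cS : Fin n → Finset (Fin n) → ℝ)
    (Y : Fin n → Ω → ℝ)
    (hY : ∀ i ω, Y i ω =
      c i + ∑ S' ∈ (N i).powerset.filter (fun S' => S'.card ≤ β ∧ S'.Nonempty),
        cS i S' * ∏ j ∈ S', (if z j ω = 1 then (1 : ℝ) else 0)) :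
    (∫ ω, (1 / (n : ℝ)) * ∑ i, Y i ω *
        (∑ S ∈ (M i).powerset.filter (fun S => S.card ≤ β),
          ((∏ j ∈ S, (z j ω - p) / p) - ∏ j ∈ S, (p - z j ω) / (1 - p))) ∂ℙ)
      = (1 / (n : ℝ)) * ∑ i,
          ∑ S' ∈ (N i).powerset.filter (fun S' => S'.card ≤ β ∧ S'.Nonempty), cS i S' :=
  stmt9_general z p hp0 hp1 hmeas hindep hval hbern β N M hNM c cS Y hY
end
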